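/- Let n be an odd integer with n ≥ 5, T = {an + b(3n−2) + c(3n−1) : a,b,c ∈ ℕ}, F(T) = n(3n−7)/2 + 2, S = T ∪ {F(T)}, and let i be an integer with 2 ≤ i ≤ (n−3)/2. Then s ∈ Ap(S, F(T)) has exactly i factorizations (s ∈ M_i) if and only if nf(s) = (x,y,z) satisfies one of the following disjoint conditions: (1) y = i−2, z = 1 and (3n−5)/2 ≤ x ≤ (3n−3)/2; (2) y = i−1, z = 0 and 3(i−1) ≤ x ≤ (3n−3)/2; (3) y = i−1, z = 1 and 3(i−1) ≤ x ≤ (3n−7)/2; (4) i ≤ y ≤ (n−3)/2, z = 0 and 3(i−1) ≤ x ≤ 3i−1; (5) i ≤ y ≤ (n−5)/2, z = 1 and 3(i−1) ≤ x ≤ 3i−1. -/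
import Mathlib


/-- The numerical semigroup `T = ⟨n, 3n-2, 3n-1⟩` as a subset of `ℕ`. -/
def Tset (n : ℕ) : Set ℕ :=
  {s | ∃ a b c : ℕ, s = a * n + b * (3 * n - 2) + c * (3 * n - 1)}

/-- The Frobenius number of `T`, `F(T) = n(3n-7)/2 + 2` (exact division since `n` is odd). -/
def FT (n : ℕ) : ℕ := n * (3 * n - 7) / 2 + 2

/-- The numerical semigroup `S = T ∪ {F(T)} = ⟨n, 3n-2, 3n-1, F(T)⟩`. -/
def Sset (n : ℕ) : Set ℕ := Tset n ∪ {FT n}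

/-- The Apéry set `Ap(S, F(T)) = {s ∈ S | s - F(T) ∉ S}`. -/
def Ap (n : ℕ) : Set ℕ := {s ∈ Sset n | ¬ ∃ t ∈ Sset n, t + FT n = s}

/-- `phi n (x,y,z) = xn + y(3n-2) + z(3n-1)`. -/
def phi (n : ℕ) (p : ℕ × ℕ × ℕ) : ℕ :=
  p.1 * n + p.2.1 * (3 * n - 2) + p.2.2 * (3 * n - 1)

/-- The set of factorizations of `s` with respect to `(n, 3n-2, 3n-1)`. -/
def Zfac (n s : ℕ) : Set (ℕ × ℕ × ℕ) := {p | phi n p = s}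

/-- `p` is the normal form of `s`: a factorization with `z < 2`, `y < (n+1)/2`,
`x < (3n-1)/2`. -/
def IsNF (n s : ℕ) (p : ℕ × ℕ × ℕ) : Prop :=
  p ∈ Zfac n s ∧ p.2.2 < 2 ∧ p.2.1 < (n + 1) / 2 ∧ p.1 < (3 * n - 1) / 2

/-- `M_i`: elements of the Apéry set having exactly `i` factorizations. -/
def Mset (n i : ℕ) : Set ℕ := {s ∈ Ap n | (Zfac n s).ncard = i}

/-- `nf(M_i)`: normal forms of elements of `M_i`. -/
def nfM (n i : ℕ) : Set (ℕ × ℕ × ℕ) := {p | ∃ s ∈ Mset n i, IsNF n s p}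

/-- An L-shape associated with `Ap(S, F(T))`: (C1) `phi` is a bijection from `L` onto the
Apéry set; (C2) `L` is downward closed for the componentwise order. -/
def IsLShape (n : ℕ) (L : Set (ℕ × ℕ × ℕ)) : Prop :=
  Set.BijOn (phi n) L (Ap n) ∧ ∀ u ∈ L, ∀ v : ℕ × ℕ × ℕ, v ≤ u → v ∈ L

/-- The L-shape `F = F₁ ∪ F₂ ∪ F₃ ∪ F₄` (in `F₃`, `y ≤ (n-7)/2` is stated over the
integers as `2y + 7 ≤ n`, so that `F₃ = ∅` when `n = 5`). -/
def Fset (n : ℕ) : Set (ℕ × ℕ × ℕ) :=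
  {p | p.2.2 = 0 ∧ p.1 ≤ (3 * n - 3) / 2 ∧ p.2.1 ≤ (n - 3) / 2} ∪
  {p | p.2.2 = 0 ∧ p.1 ≤ 1 ∧ p.2.1 = (n - 1) / 2} ∪
  {p | p.2.2 = 1 ∧ p.1 ≤ (3 * n - 3) / 2 ∧ 2 * p.2.1 + 7 ≤ n} ∪
  {p | p.2.2 = 1 ∧ p.1 ≤ (3 * n - 5) / 2 ∧ p.2.1 = (n - 5) / 2}

lemma phi_eq (u a b c : ℕ) :
    phi (2*u+5) (a, b, c) = a*(2*u+5) + b*(6*u+13) + c*(6*u+14) := by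
  show a*(2*u+5) + b*(3*(2*u+5)-2) + c*(3*(2*u+5)-1) = _
  have h1 : 3*(2*u+5)-2 = 6*u+13 := by omega
  have h2 : 3*(2*u+5)-1 = 6*u+14 := by omega
  rw [h1, h2]


lemma FT_eq (u : ℕ) : FT (2*u+5) = 6*u^2+23*u+22 := by
  show (2*u+5) * (3*(2*u+5)-7) / 2 + 2 = _
  have h1 : 3*(2*u+5)-7 = 6*u+8 := by omega
  rw [h1]
  have h2 : (2*u+5) * (6*u+8) = (6*u^2+23*u+20)*2 := by ring
  rw [h2, Nat.mul_div_cancel _ (by norm_num)]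


lemma canon (u : ℕ) : ∀ N a b c, b + c ≤ N →
    ∃ x y z, phi (2*u+5) (x,y,z) = phi (2*u+5) (a,b,c) ∧ z ≤ 1 ∧ y ≤ u+2 ∧
      (z = 1 → y ≤ u+1) := by
  intro N
  induction N with
  | zero => intro a b c h; exact ⟨a, b, c, rfl, by omega, by omega, by omega⟩
  | succ N ih =>
    intro a b c h
    by_cases hc : 2 ≤ c
    · obtain ⟨c', rfl⟩ : ∃ c', c = c' + 2 := ⟨c - 2, by omega⟩
      obtain ⟨x,y,z,he,h1,h2,h3⟩ := ih (a+3) (b+1) c' (by omega)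
      refine ⟨x,y,z, he.trans ?_, h1,h2,h3⟩
      rw [phi_eq, phi_eq]; ring
    · by_cases hb1 : c = 1 ∧ u + 2 ≤ b
      · obtain ⟨x,y,z,he,h1,h2,h3⟩ := ih (a+(3*u+8)) (b-(u+2)) 0 (by omega)
        refine ⟨x,y,z, he.trans ?_, h1,h2,h3⟩
        obtain ⟨rfl, hb⟩ := hb1
        obtain ⟨b', rfl⟩ : ∃ b', b = b' + (u+2) := ⟨b-(u+2), by omega⟩
        rw [phi_eq, phi_eq]
        simp only [Nat.add_sub_cancel]
        ring
      · by_cases hb0 : c = 0 ∧ u+3 ≤ b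
        · obtain ⟨x,y,z,he,h1,h2,h3⟩ := ih (a+(3*u+5)) (b-(u+3)) 1 (by omega)
          refine ⟨x,y,z, he.trans ?_, h1,h2,h3⟩
          obtain ⟨rfl, hb⟩ := hb0
          obtain ⟨b', rfl⟩ : ∃ b', b = b' + (u+3) := ⟨b-(u+3), by omega⟩
          rw [phi_eq, phi_eq]
          simp only [Nat.add_sub_cancel]
          ring
        · exact ⟨a,b,c, rfl, by omega, by omega, by omega⟩

lemma count (u s x y z : ℕ) (hs : phi (2*u+5) (x,y,z) = s)
    (hz : z ≤ 1) (hy : y ≤ u+2) (hx : x ≤ 3*u+6) (hk : 2*y+z ≤ 2*u+4) :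
    (Zfac (2*u+5) s).ncard
      = min y (x/3) + 1 + (if z = 1 ∧ 3*u+5 ≤ x then 1 else 0) := by
  have hmem : ∀ a b c : ℕ,
      (a,b,c) ∈ (((Finset.range (min y (x/3)+1)).image
          (fun j => (x-3*j, y-j, z+2*j)))
        ∪ (if z = 1 ∧ 3*u+5 ≤ x then {(x-(3*u+5), y+(u+3), 0)} else ∅)) ↔
      ((∃ j ≤ min y (x/3), (x-3*j, y-j, z+2*j) = (a,b,c)) ∨
        ((z = 1 ∧ 3*u+5 ≤ x) ∧ (a,b,c) = (x-(3*u+5), y+(u+3), 0))) := by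
    intro a b c
    rw [Finset.mem_union]
    constructor
    · rintro (h | h)
      · simp only [Finset.mem_image, Finset.mem_range, Nat.lt_succ_iff] at h
        obtain ⟨j, hj, he⟩ := h
        exact Or.inl ⟨j, hj, he⟩
      · right
        split_ifs at h with hB
        · simp only [Finset.mem_singleton] at h
          exact ⟨hB, h⟩
        · simp at h
    · rintro (⟨j, hj, he⟩ | ⟨hB, he⟩)
      · exact Or.inl (by
          simp only [Finset.mem_image, Finset.mem_range, Nat.lt_succ_iff]
          exact ⟨j, hj, he⟩)
      · right; rw [if_pos hB]; simp [he]
  have hset : Zfac (2*u+5) s =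
      ↑(((Finset.range (min y (x/3)+1)).image
          (fun j => (x-3*j, y-j, z+2*j)))
        ∪ (if z = 1 ∧ 3*u+5 ≤ x then {(x-(3*u+5), y+(u+3), 0)} else ∅)) := by
    ext ⟨a,b,c⟩
    rw [Finset.mem_coe, hmem]
    show phi (2*u+5) (a,b,c) = s ↔ _
    constructor
    · intro h
      have hE : a*(2*u+5) + b*(6*u+13) + c*(6*u+14)
          = x*(2*u+5) + y*(6*u+13) + z*(6*u+14) := by
        rw [← phi_eq, ← phi_eq, h, hs]
      have hEZ : (a:ℤ)*(2*u+5) + b*(6*u+13) + c*(6*u+14)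
          = (x:ℤ)*(2*u+5) + y*(6*u+13) + z*(6*u+14) := by exact_mod_cast hE
      have hQZ : ((a:ℤ)+3*b+3*c)*(2*u+5) + (2*y+z)
          = ((x:ℤ)+3*y+3*z)*(2*u+5) + (2*b+c) := by linear_combination hEZ
      have hPQ : (x:ℤ)+3*y+3*z ≤ (a:ℤ)+3*b+3*c := by
        by_contra hcon
        push_neg at hcon
        have h1 : ((a:ℤ)+3*b+3*c+1) * (2*(u:ℤ)+5) ≤ ((x:ℤ)+3*y+3*z)*(2*(u:ℤ)+5) :=
          mul_le_mul_of_nonneg_right (by omega) (by positivity)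
        have hkz : (2*(y:ℤ)+z) ≤ 2*(u:ℤ)+4 := by exact_mod_cast hk
        have hbc : (0:ℤ) ≤ 2*(b:ℤ)+c := by positivity
        nlinarith [hQZ, h1, hkz, hbc]
      obtain ⟨d, hd⟩ : ∃ d : ℕ, a+3*b+3*c = x+3*y+3*z + d := by
        refine ⟨a+3*b+3*c - (x+3*y+3*z), ?_⟩
        have : x+3*y+3*z ≤ a+3*b+3*c := by exact_mod_cast hPQ
        omega
      have hdZ : (a:ℤ)+3*b+3*c = (x:ℤ)+3*y+3*z+d := by exact_mod_cast hd
      have hDZ : (2*(b:ℤ)+c) = 2*y+z + d*(2*(u:ℤ)+5) := by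
        linear_combination (2*(u:ℤ)+5) * hdZ - hQZ
      have hDN : 2*b+c = 2*y+z + d*(2*u+5) := by exact_mod_cast hDZ
      rcases d with _ | _ | d
      · -- d = 0
        left
        refine ⟨y - b, ?_, ?_⟩
        · rw [le_min_iff]
          constructor
          · omega
          · omega
        · simp only [Prod.mk.injEq]
          omega
      · -- d = 1
        right
        constructor
        · omega
        · simp only [Prod.mk.injEq]
          omega
      · -- d ≥ 2
        exfalso
        obtain ⟨D, hD1, hD2⟩ : ∃ D, 2*b+c = 2*y+z+D ∧ 4*u+10+5*d ≤ D := by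
          refine ⟨(d+2)*(2*u+5), hDN, ?_⟩
          have : d*5 ≤ d*(2*u+5) := Nat.mul_le_mul_left d (by omega)
          nlinarith
        omega
    · rintro (⟨j, hj, he⟩ | ⟨⟨hz1, hx1⟩, he⟩)
      · rw [← hs, ← he]
        have h3 : 3*j ≤ x := by
          have := le_min_iff.mp hj
          omega
        have hjy : j ≤ y := (le_min_iff.mp hj).1
        obtain ⟨x', rfl⟩ : ∃ x', x = x' + 3*j := ⟨x - 3*j, by omega⟩
        obtain ⟨y', rfl⟩ : ∃ y', y = y' + j := ⟨y - j, by omega⟩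
        rw [phi_eq, phi_eq]
        simp only [Nat.add_sub_cancel]
        ring
      · rw [← hs, he]
        subst hz1
        obtain ⟨x', rfl⟩ : ∃ x', x = x' + (3*u+5) := ⟨x - (3*u+5), by omega⟩
        rw [phi_eq, phi_eq]
        simp only [Nat.add_sub_cancel]
        ring
  rw [hset, Set.ncard_coe_finset]
  have hdis : Disjoint ((Finset.range (min y (x/3)+1)).image
      (fun j => (x-3*j, y-j, z+2*j)))
      (if z = 1 ∧ 3*u+5 ≤ x then ({(x-(3*u+5), y+(u+3), 0)} : Finset (ℕ×ℕ×ℕ)) else ∅) := by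
    split_ifs with hB
    · rw [Finset.disjoint_singleton_right]
      intro hcon
      simp only [Finset.mem_image, Finset.mem_range, Nat.lt_succ_iff] at hcon
      obtain ⟨j, hj, he⟩ := hcon
      simp only [Prod.mk.injEq] at he
      have : j ≤ y := (le_min_iff.mp hj).1
      omega
    · exact Finset.disjoint_empty_right _
  rw [Finset.card_union_of_disjoint hdis,
    Finset.card_image_of_injOn, Finset.card_range]
  · congr 1
    split_ifs <;> simp
  · intro j hj j' hj' he
    simp only [Prod.mk.injEq] at he
    omega

lemma phi_Tset (u a b c : ℕ) : phi (2*u+5) (a,b,c) ∈ Tset (2*u+5) :=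
  ⟨a, b, c, rfl⟩


lemma ap_mem (u s : ℕ) (hs : s ∈ Ap (2*u+5)) :
    ∃ x y z, phi (2*u+5) (x,y,z) = s ∧ z ≤ 1 ∧ y ≤ u+2 ∧ (z = 1 → y ≤ u) ∧
      x ≤ 3*u+6 ∧ (z = 0 → y = u+2 → x ≤ 1) := by
  obtain ⟨hsS, hnot⟩ := hs
  have hsT : s ∈ Tset (2*u+5) := by
    rcases hsS with h | h
    · exact h
    · exfalso
      refine hnot ⟨0, Or.inl ⟨0, 0, 0, by simp⟩, ?_⟩
      simp only [Set.mem_singleton_iff] at h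
      omega
  obtain ⟨a, b, c, hab⟩ := hsT
  have hab' : phi (2*u+5) (a,b,c) = s := hab.symm
  obtain ⟨x, y, z, he, hz, hy, hz1⟩ := canon u (b+c) a b c le_rfl
  have hphi : phi (2*u+5) (x,y,z) = s := he.trans hab'
  -- exclusion (a): x ≤ 3u+6
  have hx : x ≤ 3*u+6 := by
    by_contra hcon
    push_neg at hcon
    obtain ⟨x', rfl⟩ : ∃ x', x = x' + (3*u+7) := ⟨x - (3*u+7), by omega⟩
    refine hnot ⟨phi (2*u+5) (x', y+1, z), Or.inl (phi_Tset u x' (y+1) z), ?_⟩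
    rw [← hphi, phi_eq, phi_eq, FT_eq]
    ring
  -- exclusion (b): z = 1 → y ≤ u
  have hz1' : z = 1 → y ≤ u := by
    intro h1
    by_contra hcon
    have hyu : y = u + 1 := by omega
    exfalso
    refine hnot ⟨phi (2*u+5) (x+1, 0, 0), Or.inl (phi_Tset u (x+1) 0 0), ?_⟩
    rw [← hphi, phi_eq, phi_eq, FT_eq, h1, hyu]
    ring
  -- exclusion (c): z = 0 → y = u+2 → x ≤ 1
  have hcor : z = 0 → y = u+2 → x ≤ 1 := by
    intro h0 hyu
    by_contra hcon
    push_neg at hcon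
    obtain ⟨x', rfl⟩ : ∃ x', x = x' + 2 := ⟨x - 2, by omega⟩
    refine hnot ⟨phi (2*u+5) (x', 0, 1), Or.inl (phi_Tset u x' 0 1), ?_⟩
    rw [← hphi, phi_eq, phi_eq, FT_eq, h0, hyu]
    ring
  exact ⟨x, y, z, hphi, hz, hy, hz1', hx, hcor⟩

/-- For `2 ≤ i ≤ (n-3)/2`, an element of the Apéry set has exactly `i` factorizations
iff its normal form satisfies one of five disjoint conditions. -/
theorem stmt9 (n : ℕ) (hodd : Odd n) (hn : 5 ≤ n)
    (i : ℕ) (hi2 : 2 ≤ i) (hin : i ≤ (n - 3) / 2) :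
    ∀ s ∈ Ap n, (s ∈ Mset n i ↔
      ∃ x y z : ℕ, IsNF n s (x, y, z) ∧
        ((y = i - 2 ∧ z = 1 ∧ (3 * n - 5) / 2 ≤ x ∧ x ≤ (3 * n - 3) / 2) ∨
         (y = i - 1 ∧ z = 0 ∧ 3 * (i - 1) ≤ x ∧ x ≤ (3 * n - 3) / 2) ∨
         (y = i - 1 ∧ z = 1 ∧ 3 * (i - 1) ≤ x ∧ x ≤ (3 * n - 7) / 2) ∨
         (i ≤ y ∧ y ≤ (n - 3) / 2 ∧ z = 0 ∧ 3 * (i - 1) ≤ x ∧ x ≤ 3 * i - 1) ∨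
         (i ≤ y ∧ y ≤ (n - 5) / 2 ∧ z = 1 ∧ 3 * (i - 1) ≤ x ∧ x ≤ 3 * i - 1))) := by
  obtain ⟨u, rfl⟩ : ∃ u, n = 2*u+5 := by
    obtain ⟨k, hk⟩ := hodd
    exact ⟨(n-5)/2, by omega⟩
  have hinu : i ≤ u + 1 := by omega
  intro s hsAp
  constructor
  · intro hsM
    obtain ⟨x, y, z, hphi, hz, hy, hz1, hx, hcor⟩ := ap_mem u s hsAp
    have hcount := count u s x y z hphi hz hy hx (by omega)
    have hi : (Zfac (2*u+5) s).ncard = i := hsM.2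
    rw [hcount] at hi
    refine ⟨x, y, z, ⟨hphi, by show z < 2; omega, by show y < (2*u+5+1)/2; omega,
      by show x < (3*(2*u+5)-1)/2; omega⟩, ?_⟩
    have hz1' : z ≠ 1 ∨ y ≤ u := by
      rcases eq_or_ne z 1 with h | h
      · exact Or.inr (hz1 h)
      · exact Or.inl h
    have hcor' : z ≠ 0 ∨ y ≠ u+2 ∨ x ≤ 1 := by tauto
    rcases le_or_gt y (x/3) with hm | hm
    · rw [min_eq_left hm] at hi
      split_ifs at hi with hB
      · omega
      · omega
    · rw [min_eq_right hm.le] at hi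
      split_ifs at hi with hB
      · omega
      · omega
  · rintro ⟨x, y, z, ⟨hphi, hz2, hyb, hxb⟩, hcond⟩
    have hphi' : phi (2*u+5) (x,y,z) = s := hphi
    have hz : z ≤ 1 := by omega
    have hy : y ≤ u+2 := by omega
    have hx : x ≤ 3*u+6 := by omega
    have hk : 2*y+z ≤ 2*u+4 := by omega
    refine ⟨hsAp, ?_⟩
    rw [count u s x y z hphi' hz hy hx hk]
    rcases le_or_gt y (x/3) with hm | hm
    · rw [min_eq_left hm]
      split_ifs with hB
      · omega
      · omega
    · rw [min_eq_right hm.le]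
      split_ifs with hB
      · omega
      · omega
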